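/- arXiv:2511.04273 — 3 statements merged into one kernel-verified Lean document; each statement's English description precedes it below -/
import Mathlib

section
/- Let ε be a random vector with independent coordinates, Θ invertible, η = Θε, and P_j = Θ_{·j} Θ^{-1}_{j·}. Then the characteristic function of η satisfies the functional equation φ_η(s) = ∏_{j=1}^n φ_η(s P_j) for all row vectors s. -/
open Matrix MeasureTheory ProbabilityTheory

/-!
Write `c = s Θ`. Then `s · η = ∑ⱼ cⱼ εⱼ`, while `s P_j · η = cⱼ εⱼ` because `Θ⁻¹_{j·} Θ ε = εⱼ`.
So both sides of the equation are the characteristic function of `∑ⱼ cⱼ εⱼ` at `1`, once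
directly and once factored over the independent summands.
-/

theorem Matrix.vecMul_vecMulVec_col_inv_row_dotProduct_mulVec {n α : Type*} [Fintype n]
    [DecidableEq n] [CommRing α] (Θ : Matrix n n α) [Invertible Θ] (s x : n → α) (j : n) :
    s ᵥ* vecMulVec (fun i => Θ i j) (Θ⁻¹ j) ⬝ᵥ Θ *ᵥ x = (s ᵥ* Θ) j * x j := by
  rw [vecMul_vecMulVec, smul_dotProduct, smul_eq_mul]
  congr 1
  change (Θ⁻¹ *ᵥ Θ *ᵥ x) j = x j
  rw [mulVec_mulVec, inv_mul_of_invertible, one_mulVec]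

theorem ProbabilityTheory.iIndepFun.integral_cexp_I_mul_sum {Ω ι : Type*} [MeasurableSpace Ω]
    [Fintype ι] {μ : Measure Ω} {X : ι → Ω → ℝ} (hX : iIndepFun X μ) (mX : ∀ i, Measurable (X i))
    (c : ι → ℝ) :
    ∫ ω, Complex.exp (Complex.I * ((∑ i, c i * X i ω : ℝ) : ℂ)) ∂μ
      = ∏ i, ∫ ω, Complex.exp (Complex.I * ((c i * X i ω : ℝ) : ℂ)) ∂μ := by
  simp_rw [Complex.ofReal_sum, Finset.mul_sum, Complex.exp_sum]
  exact hX.integral_fun_prod_comp (f := fun i x => Complex.exp (Complex.I * ((c i * x : ℝ) : ℂ)))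
    (fun i => (mX i).aemeasurable) fun i => by fun_prop

theorem charFun_functional_equation_general {n : ℕ} {Ω : Type*} [MeasurableSpace Ω]
    (μ : Measure Ω)
    (ε : Ω → Fin n → ℝ) (hmeas : ∀ j, Measurable fun ω => ε ω j)
    (hindep : iIndepFun (fun j ω => ε ω j) μ)
    (Θ : Matrix (Fin n) (Fin n) ℝ) [Invertible Θ]
    (P : Fin n → Matrix (Fin n) (Fin n) ℝ)
    (hP : ∀ j, P j = Matrix.of fun i k => Θ i j * Θ⁻¹ j k)
    (φ : (Fin n → ℝ) → ℂ)
    (hφ : ∀ s, φ s = ∫ ω, Complex.exp (Complex.I * ((s ⬝ᵥ Θ.mulVec (ε ω) : ℝ) : ℂ)) ∂μ)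
    (s : Fin n → ℝ) :
    φ s = ∏ j, φ (Matrix.vecMul s (P j)) := by
  have hsum : ∀ ω, s ⬝ᵥ Θ *ᵥ ε ω = ∑ j, (s ᵥ* Θ) j * ε ω j := fun ω =>
    dotProduct_mulVec s Θ (ε ω)
  have hproj : ∀ j ω, s ᵥ* P j ⬝ᵥ Θ *ᵥ ε ω = (s ᵥ* Θ) j * ε ω j := fun j ω => by
    rw [hP j]
    exact vecMul_vecMulVec_col_inv_row_dotProduct_mulVec Θ s (ε ω) j
  simp_rw [hφ, hproj, hsum]
  exact hindep.integral_cexp_I_mul_sum hmeas _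

theorem charFun_functional_equation {n : ℕ} {Ω : Type*} [MeasurableSpace Ω]
    (μ : Measure Ω) [IsProbabilityMeasure μ]
    (ε : Ω → Fin n → ℝ) (hmeas : ∀ j, Measurable fun ω => ε ω j)
    (hindep : iIndepFun (fun j ω => ε ω j) μ)
    (Θ : Matrix (Fin n) (Fin n) ℝ) [Invertible Θ]
    (P : Fin n → Matrix (Fin n) (Fin n) ℝ)
    (hP : ∀ j, P j = Matrix.of fun i k => Θ i j * Θ⁻¹ j k)
    (φ : (Fin n → ℝ) → ℂ)
    (hφ : ∀ s, φ s = ∫ ω, Complex.exp (Complex.I * ((s ⬝ᵥ Θ.mulVec (ε ω) : ℝ) : ℂ)) ∂μ)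
    (s : Fin n → ℝ) :
    φ s = ∏ j, φ (Matrix.vecMul s (P j)) :=
  charFun_functional_equation_general μ ε hmeas hindep Θ P hP φ hφ s
end

section
/- Let Θ be a 2×2 matrix with columns (cos θ_1, sin θ_1)ᵀ and (cos θ_2, sin θ_2)ᵀ where the angle between the columns is at least ε > 0 (i.e., the absolute value of the angular difference θ_2 − θ_1 modulo π lies in [ε, π − ε]). Then the operator norm of P_1 = Θ_{·1} Θ^{-1}_{1·} is at most 1/sin(ε). -/
/-!
`P₁` is the outer product of the first column of `Θ` with the first row of `Θ⁻¹`, so its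
operator norm is the product of their Euclidean norms. The column is a unit vector, and by
the adjugate formula the first row of `Θ⁻¹` is `(sin θ₂, -cos θ₂) / det Θ`, of norm
`1 / |det Θ| = 1 / |sin (θ₂ - θ₁)| ≤ 1 / sin ε`.
-/

open Matrix Real

namespace Matrix

lemma toEuclideanCLM_vecMulVec {𝕜 n : Type*} [RCLike 𝕜] [Fintype n] [DecidableEq n]
    (x y : n → 𝕜) :
    toEuclideanCLM (𝕜 := 𝕜) (vecMulVec x y) =
      InnerProductSpace.rankOne 𝕜 (WithLp.toLp 2 x) (WithLp.toLp 2 (star y)) := by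
  apply ContinuousLinearMap.coe_injective
  rw [coe_toEuclideanCLM_eq_toEuclideanLin, ← LinearEquiv.eq_symm_apply,
    InnerProductSpace.symm_toEuclideanLin_rankOne]
  simp

lemma norm_toEuclideanCLM_vecMulVec {𝕜 n : Type*} [RCLike 𝕜] [Fintype n] [DecidableEq n]
    (x y : n → 𝕜) :
    ‖toEuclideanCLM (𝕜 := 𝕜) (vecMulVec x y)‖ = ‖WithLp.toLp 2 x‖ * ‖WithLp.toLp 2 y‖ := by
  rw [toEuclideanCLM_vecMulVec, InnerProductSpace.norm_rankOne]
  simp [EuclideanSpace.norm_eq]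

-- Both sides vanish when `A` is singular, since then `A⁻¹ = 0`.
lemma norm_inv_row_zero_fin_two {𝕜 : Type*} [RCLike 𝕜] (A : Matrix (Fin 2) (Fin 2) 𝕜) :
    ‖WithLp.toLp 2 (A⁻¹ 0)‖ = ‖WithLp.toLp 2 (Aᵀ 1)‖ / ‖A.det‖ := by
  have hrow : A⁻¹ 0 = A.det⁻¹ • ![A 1 1, -A 0 1] := by
    ext j; fin_cases j <;> simp [inv_def, adjugate_fin_two]
  rw [hrow, WithLp.toLp_smul, norm_smul, norm_inv, EuclideanSpace.norm_eq, EuclideanSpace.norm_eq]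
  simp [Fin.sum_univ_two, add_comm, div_eq_inv_mul]

end Matrix

lemma norm_toLp_cos_sin (θ : ℝ) : ‖WithLp.toLp 2 ![cos θ, sin θ]‖ = 1 := by
  simp [EuclideanSpace.norm_eq, Fin.sum_univ_two]

lemma det_cos_sin_fin_two (θ₁ θ₂ : ℝ) :
    (!![cos θ₁, cos θ₂; sin θ₁, sin θ₂]).det = sin (θ₂ - θ₁) := by
  rw [det_fin_two_of, sin_sub]; ring

theorem P1_opNorm_bound (θ₁ θ₂ ε : ℝ) (hε : 0 < ε) (hε' : ε < Real.pi / 2)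
    (hinv : Real.sin ε ≤ |Real.sin (θ₂ - θ₁)|)
    (Θ : Matrix (Fin 2) (Fin 2) ℝ)
    (hΘ : Θ = !![Real.cos θ₁, Real.cos θ₂; Real.sin θ₁, Real.sin θ₂])
    (P₁ : Matrix (Fin 2) (Fin 2) ℝ)
    (hP₁ : P₁ = Matrix.of fun i k => Θ i 0 * Θ⁻¹ 0 k) :
    ‖(Matrix.toEuclideanCLM (𝕜 := ℝ) P₁ :
        EuclideanSpace ℝ (Fin 2) →L[ℝ] EuclideanSpace ℝ (Fin 2))‖ ≤ 1 / Real.sin ε := by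
  have hsin : 0 < sin ε := sin_pos_of_pos_of_lt_pi hε (by linarith [pi_pos])
  have hP : P₁ = vecMulVec (Θᵀ 0) (Θ⁻¹ 0) := hP₁
  have hcol₁ : Θᵀ 0 = ![cos θ₁, sin θ₁] := by ext i; fin_cases i <;> simp [hΘ]
  have hcol₂ : Θᵀ 1 = ![cos θ₂, sin θ₂] := by ext i; fin_cases i <;> simp [hΘ]
  rw [hP, norm_toEuclideanCLM_vecMulVec, norm_inv_row_zero_fin_two, hcol₁, hcol₂,
    norm_toLp_cos_sin, norm_toLp_cos_sin, hΘ, det_cos_sin_fin_two, Real.norm_eq_abs, one_mul]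
  exact one_div_le_one_div_of_le hsin hinv
end

section
/- Let η be an R^n-valued random vector whose characteristic function φ never vanishes, generated as η = Θε with ε having independent coordinates and Θ invertible, and let P_j = Θ_{·j} Θ^{-1}_{j·}. Then, choosing a continuous branch of the logarithm of φ with log φ(0) = 0, one has log φ(s) = ∑_{j=1}^n log φ(s P_j) for all s; equivalently ∑_{j=0}^n a_j log φ(s P_j) = 0 where P_0 = I, a_0 = 1 and a_j = −1 for j ≥ 1. -/
/-!
Writing `c = s Θ`, the rank-one projection `P_j = Θ_{·j} Θ⁻¹_{j·}` satisfies
`⟨s P_j, Θ x⟩ = c_j x_j`, while `⟨s, Θ x⟩ = ∑_j c_j x_j`. Independence of the coordinates of `ε`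
therefore factors `φ(s)` as `∏_j φ(s P_j)`, so `L` and `s ↦ ∑_j L(s P_j)` are two continuous
logarithms of `φ` on the connected space `ℝⁿ` that agree at `0`. Since `exp : ℂ → ℂ \ {0}` is a
covering map, lifts are unique and the two logarithms coincide.
-/

open Matrix MeasureTheory ProbabilityTheory

theorem Complex.eq_of_exp_comp_eq {X : Type*} [TopologicalSpace X] [PreconnectedSpace X]
    {f g : X → ℂ} (hf : Continuous f) (hg : Continuous g) (he : ∀ x, exp (f x) = exp (g x))
    (x₀ : X) (h₀ : f x₀ = g x₀) : f = g :=
  isCoveringMap_exp.eq_of_comp_eq hf hg (funext fun x ↦ Subtype.ext (he x)) x₀ h₀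

theorem Matrix.vecMul_rankOne_dotProduct_mulVec {R ι : Type*} [CommRing R] [Fintype ι]
    [DecidableEq ι] {Θ : Matrix ι ι R} (hΘ : IsUnit Θ) (s x : ι → R) (j : ι) :
    s ᵥ* (of fun i k ↦ Θ i j * Θ⁻¹ j k) ⬝ᵥ Θ *ᵥ x = (s ᵥ* Θ) j * x j := by
  have hrow : Θ⁻¹ j ᵥ* Θ = Pi.single j 1 := by
    rw [← mul_apply_eq_vecMul, nonsing_inv_mul _ ((isUnit_iff_isUnit_det Θ).mp hΘ)]
    ext k
    simp [one_apply, Pi.single_apply, eq_comm]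
  have hP : (of fun i k ↦ Θ i j * Θ⁻¹ j k) = vecMulVec (fun i ↦ Θ i j) (Θ⁻¹ j) := rfl
  rw [hP, dotProduct_mulVec, vecMul_vecMul, vecMulVec_mul, hrow, vecMul_vecMulVec,
    smul_dotProduct, single_one_dotProduct, smul_eq_mul]
  rfl

theorem ProbabilityTheory.iIndepFun.integral_exp_I_mul_sum {Ω ι : Type*} [MeasurableSpace Ω]
    {μ : Measure Ω} [Fintype ι] {X : ι → Ω → ℝ} (hX : iIndepFun X μ)
    (hmX : ∀ i, AEMeasurable (X i) μ) (c : ι → ℝ) :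
    ∫ ω, Complex.exp (Complex.I * ((∑ i, c i * X i ω : ℝ) : ℂ)) ∂μ
      = ∏ i, ∫ ω, Complex.exp (Complex.I * ((c i * X i ω : ℝ) : ℂ)) ∂μ := by
  simp_rw [Complex.ofReal_sum, Finset.mul_sum, Complex.exp_sum]
  exact hX.integral_fun_prod_comp (f := fun i x ↦ Complex.exp (Complex.I * ((c i * x : ℝ) : ℂ)))
    hmX fun i ↦ by fun_prop

theorem log_charFun_functional_equation_general {n : ℕ} {Ω : Type*} [MeasurableSpace Ω]
    (μ : Measure Ω)
    (ε : Ω → Fin n → ℝ) (hmeas : ∀ j, Measurable fun ω => ε ω j)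
    (hindep : iIndepFun (fun j ω => ε ω j) μ)
    (Θ : Matrix (Fin n) (Fin n) ℝ) (hΘ : IsUnit Θ)
    (P : Fin n → Matrix (Fin n) (Fin n) ℝ)
    (hP : ∀ j, P j = Matrix.of fun i k => Θ i j * Θ⁻¹ j k)
    (φ : (Fin n → ℝ) → ℂ)
    (hφ : ∀ s, φ s = ∫ ω, Complex.exp (Complex.I * ((s ⬝ᵥ Θ.mulVec (ε ω) : ℝ) : ℂ)) ∂μ)
    (L : (Fin n → ℝ) → ℂ) (hLcont : Continuous L) (hL0 : L 0 = 0)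
    (hLexp : ∀ s, Complex.exp (L s) = φ s) :
    ∀ s, L s = ∑ j, L (Matrix.vecMul s (P j)) := by
  have hφ_prod (s : Fin n → ℝ) : φ s = ∏ j, φ (s ᵥ* P j) := by
    simp only [hφ, hP, vecMul_rankOne_dotProduct_mulVec hΘ]
    rw [← hindep.integral_exp_I_mul_sum (fun j ↦ (hmeas j).aemeasurable)]
    simp only [dotProduct_mulVec]
    rfl
  have hL_eq := Complex.eq_of_exp_comp_eq (g := fun s ↦ ∑ j, L (s ᵥ* P j)) hLcont
    (continuous_finsetSum _ fun j _ ↦ hLcont.comp (continuous_id.matrix_vecMul continuous_const))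
    (fun s ↦ by rw [Complex.exp_sum, hLexp, hφ_prod]; simp only [hLexp]) 0 (by simp [hL0])
  exact congrFun hL_eq

theorem log_charFun_functional_equation {n : ℕ} {Ω : Type*} [MeasurableSpace Ω]
    (μ : Measure Ω) [IsProbabilityMeasure μ]
    (ε : Ω → Fin n → ℝ) (hmeas : ∀ j, Measurable fun ω => ε ω j)
    (hindep : iIndepFun (fun j ω => ε ω j) μ)
    (Θ : Matrix (Fin n) (Fin n) ℝ) (hΘ : IsUnit Θ)
    (P : Fin n → Matrix (Fin n) (Fin n) ℝ)
    (hP : ∀ j, P j = Matrix.of fun i k => Θ i j * Θ⁻¹ j k)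
    (φ : (Fin n → ℝ) → ℂ)
    (hφ : ∀ s, φ s = ∫ ω, Complex.exp (Complex.I * ((s ⬝ᵥ Θ.mulVec (ε ω) : ℝ) : ℂ)) ∂μ)
    (hnv : ∀ s, φ s ≠ 0)
    (L : (Fin n → ℝ) → ℂ) (hLcont : Continuous L) (hL0 : L 0 = 0)
    (hLexp : ∀ s, Complex.exp (L s) = φ s) :
    ∀ s, L s = ∑ j, L (Matrix.vecMul s (P j)) :=
  log_charFun_functional_equation_general μ ε hmeas hindep Θ hΘ P hP φ hφ L hLcont hL0 hLexp
end
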